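/- arXiv:2410.23224 — 2 statements merged into one kernel-verified Lean document; each statement's English description precedes it below -/
import Mathlib

section
/- Let Γ be a countable group and let P ⊆ Sub_[∞](Γ) be any subset satisfying the following condition (*): for every Λ ∈ P, every d ≥ 1, every g_1,…,g_{2d} ∈ Γ such that the cosets Λg_1,…,Λg_{2d} are pairwise distinct, and every neighborhood V of Λ in Sub(Γ), there exist Λ' ∈ P ∩ V and γ ∈ Γ such that g_i γ g_{i+d}^{-1} ∈ Λ' for all i ∈ {1,…,d}. Let P̄ denote the closure of P in Sub_[∞](Γ). Then HT(Γ) ∩ P̄ is a dense G_δ subset of P̄. -/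
/-- The Chabauty topology on the space of subgroups of `Γ`: the topology induced by the
injection `Sub(Γ) → {0,1}^Γ` (indicator functions), where `{0,1}^Γ` carries the product
of the discrete topologies. -/
instance chabauty (Γ : Type*) [Group Γ] : TopologicalSpace (Subgroup Γ) :=
  TopologicalSpace.induced (fun (H : Subgroup Γ) (g : Γ) => g ∈ H)
    (@Pi.topologicalSpace Γ (fun _ => Prop) (fun _ => ⊥))

/-- The space of right cosets `Λ\Γ`. -/
def rQuot {Γ : Type*} [Group Γ] (Λ : Subgroup Γ) : Type _ :=
  Quotient (QuotientGroup.rightRel Λ)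

/-- The right-translation action of `Γ` on the right coset space `Λ\Γ`:
`Λx · γ = Λxγ`. -/
def rAct {Γ : Type*} [Group Γ] (Λ : Subgroup Γ) (γ : Γ) : rQuot Λ → rQuot Λ :=
  Quotient.map' (fun x => x * γ) (by
    intro x y h
    rw [QuotientGroup.rightRel_apply] at h ⊢
    have key : y * γ * (x * γ)⁻¹ = y * x⁻¹ := by group
    rw [key]; exact h)

/-- The right-translation action of `Γ` on `Λ\Γ` is highly transitive: for every `d ≥ 1`,
any `d`-tuple of pairwise distinct cosets can be mapped to any other by some `γ ∈ Γ`. -/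
def HTcoset {Γ : Type*} [Group Γ] (Λ : Subgroup Γ) : Prop :=
  ∀ d : ℕ, 1 ≤ d → ∀ x y : Fin d → rQuot Λ,
    Function.Injective x → Function.Injective y →
    ∃ γ : Γ, ∀ i, rAct Λ γ (x i) = y i

/-- `HT(Γ)`: the set of infinite index subgroups `Λ ≤ Γ` whose right-translation action
on `Λ\Γ` is highly transitive. -/
def HTset (Γ : Type*) [Group Γ] : Set (Subgroup Γ) :=
  {Λ | Infinite (rQuot Λ) ∧ HTcoset Λ}

/-!
`Sub(Γ)` is a closed subspace of `{0,1}^Γ`, hence compact Hausdorff, so `P̄` is a Baire space.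
Having at least `n` cosets, and, for tuples `g, h` representing `2d` distinct cosets, the
existence of `γ` with `Λ g_i γ = Λ h_i`, are open conditions on `Λ`; countably many of them cut
out `HT(Γ)`, since moving a tuple of cosets to an arbitrary one can be done in two steps through
a tuple disjoint from both. By Condition (*) each of these open sets meets `P` densely in `P̄`.
-/

open Set Topology

section Chabauty

variable {Γ : Type*} [Group Γ]

-- `Prop` carries the Sierpiński topology as an instance, so we pass to the discrete `Γ → Bool`.
open scoped Classical in
noncomputable def subgroupIndicator (Γ : Type*) [Group Γ] (H : Subgroup Γ) : Γ → Bool :=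
  fun g => decide (g ∈ H)

@[simp]
lemma subgroupIndicator_eq_true {H : Subgroup Γ} {g : Γ} :
    subgroupIndicator Γ H g = true ↔ g ∈ H := by
  simp [subgroupIndicator]

open scoped Classical in
lemma induced_decide_eq_bot : TopologicalSpace.induced (fun p : Prop => decide p) ⊥ = ⊥ := by
  refine le_antisymm (fun s _ => isOpen_induced_iff.2 ?_) bot_le
  refine ⟨(fun p : Prop => decide p) '' s, isOpen_discrete _, ?_⟩
  exact Function.Injective.preimage_image (fun p q h => propext (decide_eq_decide.1 h)) s

lemma chabauty_eq_induced_subgroupIndicator :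
    chabauty Γ = TopologicalSpace.induced (subgroupIndicator Γ) Pi.topologicalSpace := by
  simp only [chabauty, Pi.topologicalSpace, induced_iInf, induced_compose]
  refine iInf_congr fun g => ?_
  rw [← induced_decide_eq_bot, induced_compose]
  rfl

lemma isEmbedding_subgroupIndicator : IsEmbedding (subgroupIndicator Γ) :=
  ⟨⟨chabauty_eq_induced_subgroupIndicator⟩, fun H K h => by
    ext g; rw [← subgroupIndicator_eq_true, h, subgroupIndicator_eq_true]⟩

lemma isClopen_setOf_apply_eq_true {α : Type*} (a : α) : IsClopen {f : α → Bool | f a = true} :=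
  (isClopen_discrete {true}).preimage (continuous_apply (A := fun _ : α => Bool) a)

lemma range_subgroupIndicator : range (subgroupIndicator Γ) =
    {f | f 1 = true ∧ ∀ a b, f a = true → f b = true → f (a * b⁻¹) = true} := by
  ext f
  constructor
  · rintro ⟨H, rfl⟩
    simpa using fun a b ha hb => H.mul_mem ha (H.inv_mem hb)
  · rintro ⟨h1, hdiv⟩
    refine ⟨Subgroup.ofDiv {a | f a = true} ⟨1, h1⟩ fun a ha b hb => hdiv a b ha hb, ?_⟩
    funext g
    exact Bool.eq_iff_iff.2 subgroupIndicator_eq_true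

lemma isClosed_range_subgroupIndicator : IsClosed (range (subgroupIndicator Γ)) := by
  rw [range_subgroupIndicator, ofPred_and, ofPred_forall]
  refine (isClopen_setOf_apply_eq_true 1).isClosed.inter <| isClosed_iInter fun a => ?_
  rw [ofPred_forall]
  exact isClosed_iInter fun b =>
    (isClosed_discrete {t : Bool × Bool × Bool | t.1 = true → t.2.1 = true → t.2.2 = true}).preimage
      (by fun_prop : Continuous fun f : Γ → Bool => (f a, f b, f (a * b⁻¹)))

lemma isClosedEmbedding_subgroupIndicator : IsClosedEmbedding (subgroupIndicator Γ) :=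
  ⟨isEmbedding_subgroupIndicator, isClosed_range_subgroupIndicator⟩

instance : CompactSpace (Subgroup Γ) := isClosedEmbedding_subgroupIndicator.compactSpace

instance : T2Space (Subgroup Γ) := isEmbedding_subgroupIndicator.t2Space

lemma isClopen_setOf_mem (a : Γ) : IsClopen {H : Subgroup Γ | a ∈ H} := by
  simpa using (isClopen_setOf_apply_eq_true a).preimage isEmbedding_subgroupIndicator.continuous

end Chabauty

lemma infinite_iff_forall_exists_injective_fin {α : Type*} :
    Infinite α ↔ ∀ n, ∃ f : Fin n → α, Function.Injective f := by
  refine ⟨fun _ n => ⟨Infinite.natEmbedding α ∘ Fin.val,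
    (Infinite.natEmbedding α).injective.comp Fin.val_injective⟩, fun h => ?_⟩
  by_contra hfin
  rw [not_infinite_iff_finite] at hfin
  obtain ⟨f, hf⟩ := h (Nat.card α + 1)
  have := Nat.card_le_card_of_injective f hf
  simp at this

lemma exists_injective_fin_disjoint_range {α : Type*} [Infinite α] {s : Set α} (hs : s.Finite)
    (n : ℕ) : ∃ f : Fin n → α, Function.Injective f ∧ Disjoint s (range f) := by
  have : Infinite ↥sᶜ := hs.infinite_compl.to_subtype
  obtain ⟨f, hf⟩ := infinite_iff_forall_exists_injective_fin.1 this n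
  exact ⟨Subtype.val ∘ f, Subtype.val_injective.comp hf,
    disjoint_right.2 <| forall_mem_range.2 fun i => (f i).2⟩

section Cosets

variable {Γ : Type*} [Group Γ] {Λ : Subgroup Γ}

def rQuot.mk (Λ : Subgroup Γ) (a : Γ) : rQuot Λ := Quotient.mk _ a

lemma rQuot.mk_surjective : Function.Surjective (rQuot.mk Λ) := Quotient.mk_surjective

lemma rQuot.mk_eq_mk_iff {a b : Γ} : rQuot.mk Λ a = rQuot.mk Λ b ↔ b * a⁻¹ ∈ Λ :=
  Quotient.eq.trans QuotientGroup.rightRel_apply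

lemma rQuot.mk_ne_mk_iff {a b : Γ} : rQuot.mk Λ a ≠ rQuot.mk Λ b ↔ a * b⁻¹ ∉ Λ := by
  rw [ne_comm, Ne, rQuot.mk_eq_mk_iff]

lemma rAct_mk (γ a : Γ) : rAct Λ γ (rQuot.mk Λ a) = rQuot.mk Λ (a * γ) := rfl

lemma rAct_mk_eq_mk_iff {γ a b : Γ} :
    rAct Λ γ (rQuot.mk Λ a) = rQuot.mk Λ b ↔ a * γ * b⁻¹ ∈ Λ := by
  rw [rAct_mk, ← not_iff_not, ← Ne, rQuot.mk_ne_mk_iff]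

lemma rAct_mul (γ δ : Γ) (x : rQuot Λ) : rAct Λ (γ * δ) x = rAct Λ δ (rAct Λ γ x) := by
  obtain ⟨a, rfl⟩ := rQuot.mk_surjective x
  simp only [rAct_mk, mul_assoc]

variable {ι : Type*}

def DistinctCosets (Λ : Subgroup Γ) (g : ι → Γ) : Prop :=
  ∀ i j, i ≠ j → g i * (g j)⁻¹ ∉ Λ

def AdmissiblePair (Λ : Subgroup Γ) (g h : ι → Γ) : Prop :=
  DistinctCosets Λ g ∧ DistinctCosets Λ h ∧ ∀ i j, g i * (h j)⁻¹ ∉ Λ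

def MapsCosets (Λ : Subgroup Γ) (g h : ι → Γ) : Prop :=
  ∃ γ, ∀ i, g i * γ * (h i)⁻¹ ∈ Λ

lemma mapsCosets_of_isEmpty [IsEmpty ι] (g h : ι → Γ) : MapsCosets Λ g h :=
  ⟨1, isEmptyElim⟩

lemma distinctCosets_iff_injective {g : ι → Γ} :
    DistinctCosets Λ g ↔ Function.Injective (rQuot.mk Λ ∘ g) := by
  simp only [DistinctCosets, ← rQuot.mk_ne_mk_iff, Function.Injective, Function.comp_apply]
  exact forall₂_congr fun i j => not_imp_not

lemma admissiblePair_iff {g h : ι → Γ} :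
    AdmissiblePair Λ g h ↔ Function.Injective (rQuot.mk Λ ∘ g) ∧
      Function.Injective (rQuot.mk Λ ∘ h) ∧
        Disjoint (range (rQuot.mk Λ ∘ g)) (range (rQuot.mk Λ ∘ h)) := by
  simp only [AdmissiblePair, distinctCosets_iff_injective, disjoint_range_iff, Function.comp_apply,
    rQuot.mk_ne_mk_iff]

lemma mapsCosets_iff {g h : ι → Γ} :
    MapsCosets Λ g h ↔ ∃ γ, ∀ i, rAct Λ γ (rQuot.mk Λ (g i)) = rQuot.mk Λ (h i) := by
  simp only [MapsCosets, rAct_mk_eq_mk_iff]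

lemma infinite_rQuot_iff : Infinite (rQuot Λ) ↔ ∀ n, ∃ g : Fin n → Γ, DistinctCosets Λ g := by
  simp only [infinite_iff_forall_exists_injective_fin, distinctCosets_iff_injective,
    rQuot.mk_surjective.comp_left.exists]

end Cosets

section HighTransitivity

variable {Γ : Type*} [Group Γ] {Λ : Subgroup Γ}

lemma HTcoset_of_forall_disjoint [Infinite (rQuot Λ)]
    (hmove : ∀ d (x y : Fin d → rQuot Λ), Function.Injective x → Function.Injective y →
      Disjoint (range x) (range y) → ∃ γ, ∀ i, rAct Λ γ (x i) = y i) :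
    HTcoset Λ := by
  intro d _ x y hx hy
  obtain ⟨z, hz, hxyz⟩ :=
    exists_injective_fin_disjoint_range ((finite_range x).union (finite_range y)) d
  obtain ⟨γ, hγ⟩ := hmove d x z hx hz (disjoint_union_left.1 hxyz).1
  obtain ⟨δ, hδ⟩ := hmove d z y hz hy (disjoint_union_left.1 hxyz).2.symm
  exact ⟨γ * δ, fun i => by rw [rAct_mul, hγ, hδ]⟩

lemma mem_HTset_iff : Λ ∈ HTset Γ ↔ (∀ n, ∃ g : Fin n → Γ, DistinctCosets Λ g) ∧
    ∀ d (g h : Fin d → Γ), AdmissiblePair Λ g h → MapsCosets Λ g h := by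
  rw [HTset, mem_ofPred_eq, ← infinite_rQuot_iff]
  refine and_congr_right fun hinf => ⟨fun hHT d g h hgh => ?_, fun hmaps => ?_⟩
  · rw [admissiblePair_iff] at hgh
    rcases Nat.eq_zero_or_pos d with rfl | hd
    · exact mapsCosets_of_isEmpty g h
    · exact mapsCosets_iff.2 (hHT d hd _ _ hgh.1 hgh.2.1)
  · refine HTcoset_of_forall_disjoint fun d x y hx hy hxy => ?_
    obtain ⟨g, rfl⟩ := rQuot.mk_surjective.comp_left x
    obtain ⟨h, rfl⟩ := rQuot.mk_surjective.comp_left y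
    exact mapsCosets_iff.1 (hmaps d g h (admissiblePair_iff.2 ⟨hx, hy, hxy⟩))

variable {ι : Type*} [Finite ι]

lemma isClopen_setOf_distinctCosets (g : ι → Γ) :
    IsClopen {Λ : Subgroup Γ | DistinctCosets Λ g} := by
  simp only [DistinctCosets, ofPred_forall]
  exact isClopen_iInter_of_finite fun i => isClopen_iInter_of_finite fun j =>
    isClopen_iInter_of_finite fun _ => (isClopen_setOf_mem (g i * (g j)⁻¹)).compl

lemma isClopen_setOf_admissiblePair (g h : ι → Γ) :
    IsClopen {Λ : Subgroup Γ | AdmissiblePair Λ g h} := by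
  simp only [AdmissiblePair, ofPred_and, ofPred_forall]
  exact (isClopen_setOf_distinctCosets g).inter <| (isClopen_setOf_distinctCosets h).inter <|
    isClopen_iInter_of_finite fun i => isClopen_iInter_of_finite fun j =>
      (isClopen_setOf_mem (g i * (h j)⁻¹)).compl

lemma isOpen_setOf_mapsCosets (g h : ι → Γ) : IsOpen {Λ : Subgroup Γ | MapsCosets Λ g h} := by
  simp only [MapsCosets, ofPred_exists, ofPred_forall]
  exact isOpen_iUnion fun γ => isOpen_iInter_of_finite fun i => (isClopen_setOf_mem _).isOpen

lemma isOpen_setOf_admissiblePair_imp_mapsCosets (g h : ι → Γ) :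
    IsOpen {Λ : Subgroup Γ | AdmissiblePair Λ g h → MapsCosets Λ g h} := by
  simp only [imp_iff_not_or, ofPred_or]
  exact (isClopen_setOf_admissiblePair g h).compl.isOpen.union (isOpen_setOf_mapsCosets g h)

end HighTransitivity

lemma closure_subset_closure_sInter_inter_closure {X : Type*} [TopologicalSpace X] [T2Space X]
    [LocallyCompactSpace X] {P : Set X} {U : Set (Set X)} (hU : U.Countable)
    (hUopen : ∀ u ∈ U, IsOpen u) (hPU : ∀ u ∈ U, P ⊆ closure (P ∩ u)) :
    closure P ⊆ closure (⋂₀ U ∩ closure P) := by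
  have : LocallyCompactSpace (closure P) := isClosed_closure.locallyCompactSpace
  have hdense : ∀ u ∈ U, Dense (Subtype.val ⁻¹' u : Set (closure P)) := by
    intro u hu x
    rw [closure_subtype, image_preimage_eq_inter_range, Subtype.range_coe]
    have hsub : P ∩ u ⊆ u ∩ closure P := fun y hy => ⟨hy.2, subset_closure hy.1⟩
    exact closure_minimal ((hPU u hu).trans (closure_mono hsub)) isClosed_closure x.2
  have hBaire := dense_biInter_of_isOpen (fun u hu => (hUopen u hu).preimage continuous_subtype_val)
    hU hdense
  intro x hx
  have := closure_subtype.1 (hBaire ⟨x, hx⟩)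
  rwa [← preimage_iInter₂, ← sInter_eq_biInter, image_preimage_eq_inter_range,
    Subtype.range_coe] at this

section Condition

variable {Γ : Type*} [Group Γ]

def htConditions (Γ : Type*) [Group Γ] : Set (Set (Subgroup Γ)) :=
  range (fun n : ℕ => {Λ | ∃ g : Fin n → Γ, DistinctCosets Λ g}) ∪
    range (fun p : Σ d, (Fin d → Γ) × (Fin d → Γ) =>
      {Λ | AdmissiblePair Λ p.2.1 p.2.2 → MapsCosets Λ p.2.1 p.2.2})

lemma countable_htConditions [Countable Γ] : (htConditions Γ).Countable :=
  (countable_range _).union (countable_range _)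

lemma isOpen_of_mem_htConditions {u : Set (Subgroup Γ)} (hu : u ∈ htConditions Γ) : IsOpen u := by
  rcases hu with ⟨n, rfl⟩ | ⟨⟨d, g, h⟩, rfl⟩
  · simp only [ofPred_exists]
    exact isOpen_iUnion fun g => (isClopen_setOf_distinctCosets g).isOpen
  · exact isOpen_setOf_admissiblePair_imp_mapsCosets g h

lemma HTset_eq_sInter_htConditions : HTset Γ = ⋂₀ htConditions Γ := by
  ext Λ
  simp [mem_HTset_iff, htConditions, sInter_union, sInter_range, Sigma.forall]

lemma isGδ_HTset [Countable Γ] : IsGδ (HTset Γ) := by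
  rw [HTset_eq_sInter_htConditions]
  exact .sInter (fun u hu => (isOpen_of_mem_htConditions hu).isGδ) countable_htConditions

-- Condition (*), stated unbundled so that it is definitionally the hypothesis `hstar` below.
def ConditionStar (P : Set (Subgroup Γ)) : Prop :=
  ∀ Λ ∈ P, ∀ d : ℕ, 1 ≤ d → ∀ g h : Fin d → Γ, DistinctCosets Λ g → DistinctCosets Λ h →
    (∀ i j, g i * (h j)⁻¹ ∉ Λ) → ∀ V ∈ 𝓝 Λ, ∃ Λ' ∈ P ∩ V, MapsCosets Λ' g h

lemma ConditionStar.subset_closure_inter {P : Set (Subgroup Γ)} (hP : ConditionStar P) {d : ℕ}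
    (g h : Fin d → Γ) : P ⊆ closure (P ∩ {Λ | AdmissiblePair Λ g h → MapsCosets Λ g h}) := by
  intro Λ hΛ
  by_cases hadm : AdmissiblePair Λ g h
  · rcases Nat.eq_zero_or_pos d with rfl | hd
    · exact subset_closure ⟨hΛ, fun _ => mapsCosets_of_isEmpty g h⟩
    refine mem_closure_iff_nhds.2 fun V hV => ?_
    obtain ⟨Λ', ⟨hΛ'P, hΛ'V⟩, hΛ'⟩ := hP Λ hΛ d hd g h hadm.1 hadm.2.1 hadm.2.2 V hV
    exact ⟨Λ', hΛ'V, hΛ'P, fun _ => hΛ'⟩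
  · exact subset_closure ⟨hΛ, (absurd · hadm)⟩

lemma subset_closure_inter_of_mem_htConditions {P : Set (Subgroup Γ)}
    (hPinf : ∀ Λ ∈ P, Infinite (rQuot Λ)) (hP : ConditionStar P) {u : Set (Subgroup Γ)}
    (hu : u ∈ htConditions Γ) : P ⊆ closure (P ∩ u) := by
  rcases hu with ⟨n, rfl⟩ | ⟨⟨d, g, h⟩, rfl⟩
  · exact fun Λ hΛ => subset_closure ⟨hΛ, infinite_rQuot_iff.1 (hPinf Λ hΛ) n⟩
  · exact hP.subset_closure_inter g h

end Condition

/-- If `P ⊆ Sub_[∞](Γ)` satisfies Condition (*), then `HT(Γ) ∩ P̄` is a dense `Gδ`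
subset of `P̄`, the closure of `P` in the subspace `Sub_[∞](Γ)`. -/
theorem HTset_dense_Gδ_in_closure (Γ : Type*) [Group Γ] [Countable Γ]
    (P : Set (Subgroup Γ))
    (hPinf : ∀ Λ ∈ P, Infinite (rQuot Λ))
    (hstar : ∀ Λ ∈ P, ∀ d : ℕ, 1 ≤ d → ∀ g h : Fin d → Γ,
      (∀ i j, i ≠ j → g i * (g j)⁻¹ ∉ Λ) →
      (∀ i j, i ≠ j → h i * (h j)⁻¹ ∉ Λ) →
      (∀ i j, g i * (h j)⁻¹ ∉ Λ) →
      ∀ V ∈ nhds Λ, ∃ Λ' ∈ P ∩ V, ∃ γ : Γ, ∀ i, g i * γ * (h i)⁻¹ ∈ Λ') :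
    -- `P̄` is the closure of `P` inside the subspace `Sub_[∞](Γ)`
    (closure P ∩ {Λ : Subgroup Γ | Infinite (rQuot Λ)}) ⊆
        closure (HTset Γ ∩ (closure P ∩ {Λ : Subgroup Γ | Infinite (rQuot Λ)})) ∧
      ∃ T : Set (Subgroup Γ), IsGδ T ∧
        HTset Γ ∩ (closure P ∩ {Λ : Subgroup Γ | Infinite (rQuot Λ)}) =
          T ∩ (closure P ∩ {Λ : Subgroup Γ | Infinite (rQuot Λ)}) := by
  have hHT : HTset Γ ∩ (closure P ∩ {Λ : Subgroup Γ | Infinite (rQuot Λ)}) =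
      HTset Γ ∩ closure P :=
    Set.ext fun Λ => ⟨fun h => ⟨h.1, h.2.1⟩, fun h => ⟨h.1, h.2, h.1.1⟩⟩
  refine ⟨fun Λ hΛ => ?_, HTset Γ, isGδ_HTset, rfl⟩
  rw [hHT, HTset_eq_sInter_htConditions]
  exact closure_subset_closure_sInter_inter_closure countable_htConditions
    (fun _ => isOpen_of_mem_htConditions)
    (fun _ => subset_closure_inter_of_mem_htConditions hPinf hstar) hΛ.1
end

section
/- Let m, n be integers with |m| = |n| ≥ 2 and let Λ ≤ BS(m,n) be a subgroup of finite phenotype, i.e. such that the index [⟨b⟩ : ⟨b⟩ ∩ Λ] is finite. Then the right-translation action of BS(m,n) on the coset space Λ\BS(m,n) is not faithful. -/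
/-- The single Baumslag–Solitar relator `t b^m t⁻¹ b^{-n}` in the free group on two
generators (`false ↦ b`, `true ↦ t`). -/
def BSrel (m n : ℤ) : Set (FreeGroup Bool) :=
  {FreeGroup.of true * FreeGroup.of false ^ m * (FreeGroup.of true)⁻¹ *
    (FreeGroup.of false ^ n)⁻¹}

/-- The Baumslag–Solitar group `BS(m,n) = ⟨b, t ∣ t b^m t⁻¹ = b^n⟩`. -/
abbrev BS (m n : ℤ) : Type := PresentedGroup (BSrel m n)

/-- The generator `b` of `BS(m,n)`. -/
def bGen (m n : ℤ) : BS m n := PresentedGroup.of false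

/-!
Since `|m| = |n|`, the relation reads `t b^m t⁻¹ = b^{±m}`, so for every `j` the cyclic subgroup
`⟨b^{mj}⟩` is normalised by both generators and hence is normal. Finite phenotype gives some
`k > 0` with `b^k ∈ Λ`, so the normal subgroup `⟨b^{mk}⟩` lies in `Λ`, hence in its normal core,
which is exactly the kernel of the action on `Λ\BS(m,n)`. Finally `b^{mk} ≠ 1`, because `b` has
infinite order: `b ↦ r`, `t ↦ 1` or `t ↦ s` defines a map onto the infinite dihedral group.
-/

open Subgroup

theorem rAct_eq_self_of_mem_normalCore {Γ : Type*} [Group Γ] (Λ : Subgroup Γ) {γ : Γ}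
    (hγ : γ ∈ Λ.normalCore) (x : rQuot Λ) : rAct Λ γ x = x := by
  induction x using Quotient.inductionOn' with
  | h g =>
    apply Quotient.sound'
    rw [QuotientGroup.rightRel_apply, mul_inv_rev, ← mul_assoc]
    exact inv_mem hγ g

section BaumslagSolitar

variable {m n : ℤ}

def tGen (m n : ℤ) : BS m n := PresentedGroup.of true

theorem tGen_mul_bGen_zpow_mul_inv (m n : ℤ) :
    tGen m n * bGen m n ^ m * (tGen m n)⁻¹ = bGen m n ^ n := by
  have hrel : PresentedGroup.mk (BSrel m n)
      (FreeGroup.of true * FreeGroup.of false ^ m * (FreeGroup.of true)⁻¹ *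
        (FreeGroup.of false ^ n)⁻¹) = 1 :=
    (QuotientGroup.eq_one_iff _).2 (subset_normalClosure rfl)
  simp only [map_mul, map_zpow, map_inv] at hrel
  exact mul_inv_eq_one.mp hrel

theorem zpowers_bGen_zpow_mul_normal (h : m.natAbs = n.natAbs) (j : ℤ) :
    (zpowers (bGen m n ^ (m * j))).Normal := by
  rw [← normalizer_eq_top_iff, eq_top_iff, ← PresentedGroup.closure_range_of, closure_le]
  rintro _ ⟨_ | _, rfl⟩ <;>
    rw [SetLike.mem_coe, mem_normalizer_iff_map_conj_eq, MonoidHom.map_zpowers, MonoidHom.coe_coe,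
      MulAut.conj_apply]
  · change zpowers (bGen m n * _ * (bGen m n)⁻¹) = _
    rw [(Commute.zpow_right (Commute.refl _) _).eq, mul_inv_cancel_right]
  · change zpowers (tGen m n * _ * (tGen m n)⁻¹) = _
    rw [zpow_mul, ← conj_zpow, tGen_mul_bGen_zpow_mul_inv, ← zpow_mul, ← zpow_mul]
    rcases Int.natAbs_eq_natAbs_iff.mp h.symm with rfl | rfl
    · rfl
    · rw [neg_mul, zpow_neg, zpowers_inv]

open DihedralGroup in
def toInfDihedral (h : m.natAbs = n.natAbs) : BS m n →* DihedralGroup 0 :=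
  PresentedGroup.toGroup (f := fun | false => r 1 | true => if n = m then 1 else sr 0) (by
    rintro _ rfl
    simp only [map_mul, map_zpow, map_inv, FreeGroup.lift_apply_of, r_one_zpow]
    rcases Int.natAbs_eq_natAbs_iff.mp h.symm with rfl | rfl
    · simp
    · obtain rfl | hm := eq_or_ne m 0
      · simp
      · have : -m ≠ m := by omega
        simp [this])

theorem toInfDihedral_bGen (h : m.natAbs = n.natAbs) :
    toInfDihedral h (bGen m n) = DihedralGroup.r 1 :=
  PresentedGroup.toGroup.of _

theorem bGen_zpow_ne_one (h : m.natAbs = n.natAbs) {j : ℤ} (hj : j ≠ 0) :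
    bGen m n ^ j ≠ 1 := by
  intro hj1
  have := congrArg (toInfDihedral h) hj1
  rw [map_zpow, toInfDihedral_bGen, DihedralGroup.r_one_zpow, map_one,
    DihedralGroup.one_def] at this
  exact hj (DihedralGroup.r.inj this)

end BaumslagSolitar

/-- If `|m| = |n| ≥ 2` and `Λ ≤ BS(m,n)` has finite phenotype, i.e. the index
`[⟨b⟩ : ⟨b⟩ ∩ Λ]` is finite, then the right-translation action of `BS(m,n)` on
`Λ\BS(m,n)` is not faithful. -/
theorem not_faithful_of_finite_phenotype (m n : ℤ) (heq : m.natAbs = n.natAbs)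
    (h2 : 2 ≤ m.natAbs) (Λ : Subgroup (BS m n))
    (hfin : Subgroup.relIndex Λ (Subgroup.zpowers (bGen m n)) ≠ 0) :
    ∃ γ : BS m n, γ ≠ 1 ∧ ∀ x : rQuot Λ, rAct Λ γ x = x := by
  obtain ⟨k, hk, -, hbk⟩ := exists_pow_mem_of_relIndex_ne_zero hfin (mem_zpowers (bGen m n))
  have hnormal := zpowers_bGen_zpow_mul_normal heq k
  have hle : zpowers (bGen m n ^ (m * k)) ≤ Λ := by
    rw [zpowers_le, mul_comm, zpow_mul, zpow_natCast]
    exact zpow_mem (mem_inf.mp hbk).1 m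
  refine ⟨bGen m n ^ (m * k), bGen_zpow_ne_one heq (mul_ne_zero (by omega) (by omega)), fun x ↦ ?_⟩
  exact rAct_eq_self_of_mem_normalCore Λ (normal_le_normalCore.mpr hle (mem_zpowers _)) x
end
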